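/- With F as above (j(F)=1, F = id + higher order terms), the inverse Jacobian matrix J(G) = (Δ_i(x_j)) satisfies Σ_{j=1}^n ∂_j(Δ_i(x_j)) = 0 for each i, i.e., each row of the inverse Jacobian is divergence-free. -/

import Mathlib

/-!
STATEMENT 9: With `F ∈ GA_n^1((K))` (i.e. `Fᵢ = xᵢ + (degree ≥ 2 terms)`) and
`j(F) = 1`, the inverse Jacobian matrix `J(G) = (Δᵢ(x_j))` (the matrix inverse
of `J(F)`) satisfies `Σ_j ∂_j (Δᵢ(x_j)) = 0` for each `i`: each row of the
inverse Jacobian is divergence-free.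
-/

open MvPowerSeries

noncomputable section

variable {K : Type*} [Field K] [CharZero K] {n : ℕ}

def dgF {n : ℕ} (μ : Fin n →₀ ℕ) : ℕ := μ.sum fun _ e => e

/-- the partial derivative `∂_a` of a multivariate power series -/
def pd (a : Fin n) (f : MvPowerSeries (Fin n) K) : MvPowerSeries (Fin n) K :=
  fun ν => ((ν a + 1 : ℕ) : K) * MvPowerSeries.coeff (ν + Finsupp.single a 1) f

/-- `Δᵢ(g) := det J(F₁,…,F_{i−1}, g, F_{i+1},…,Fₙ)` -/
def Delta (F : Fin n → MvPowerSeries (Fin n) K) (i : Fin n)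
    (g : MvPowerSeries (Fin n) K) : MvPowerSeries (Fin n) K :=
  Matrix.det (Matrix.of fun a b => pd a (Function.update F i g b))

/-!
`Δᵢ(x_l)` is the determinant of `J(F)` with its `i`-th column replaced by the `l`-th unit
vector, i.e. the `(i, l)` entry of the adjugate of `J(F)`; so the first claim is
`adj J · J = det J · 1`. For the second (the Piola identity), expand the adjugate as a signed
sum over permutations `σ` and differentiate the products by Leibniz: each resulting term carries
a second derivative `∂_{σ i} ∂_{σ c} F_c`. Replacing `σ` by `σ ∘ (i c)` flips the sign and, since
partial derivatives commute, leaves the term unchanged, so the terms cancel in pairs.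
-/

theorem Derivation.leibniz_prod {R A M ι : Type*} [CommSemiring R] [CommSemiring A]
    [AddCommMonoid M] [Algebra R A] [Module A M] [Module R M] [DecidableEq ι]
    (D : Derivation R A M) (s : Finset ι) (f : ι → A) :
    D (∏ k ∈ s, f k) = ∑ c ∈ s, (∏ k ∈ s.erase c, f k) • D (f c) := by
  induction s using Finset.induction_on with
  | empty => simp
  | @insert x t hx ih =>
    rw [Finset.prod_insert hx, D.leibniz, ih, Finset.sum_insert hx, Finset.erase_insert hx,
      Finset.smul_sum, add_comm]
    congr 1
    refine Finset.sum_congr rfl fun c hc => ?_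
    rw [Finset.erase_insert_of_ne (ne_of_mem_of_not_mem hc hx).symm,
      Finset.prod_insert fun h => hx (Finset.mem_of_mem_erase h), mul_smul]

theorem Equiv.Perm.sum_sign_smul_eq_zero_of_mul_swap {ι M : Type*} [DecidableEq ι] [Fintype ι]
    [AddCommGroup M] (f : Equiv.Perm ι → M) {i c : ι} (hic : i ≠ c)
    (hf : ∀ σ, f (σ * Equiv.swap i c) = f σ) :
    ∑ σ, Equiv.Perm.sign σ • f σ = 0 := by
  refine Finset.sum_ninvolution (fun σ => σ * Equiv.swap i c) (fun σ => ?_) (fun σ _ => ?_)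
    (fun _ => Finset.mem_univ _) fun σ => by simp [mul_assoc]
  · rw [hf, Equiv.Perm.sign_mul, Equiv.Perm.sign_swap hic, mul_neg_one, Units.neg_smul,
      add_neg_cancel]
  · simpa [Equiv.mul_swap_eq_iff] using hic

theorem MvPowerSeries.pderiv_comm {σ R : Type*} [CommSemiring R] (i j : σ)
    (f : MvPowerSeries σ R) :
    pderiv R i (pderiv R j f) = pderiv R j (pderiv R i f) := by
  classical
  ext ν
  simp only [coeff_pderiv, add_right_comm ν (Finsupp.single j 1)]
  rcases eq_or_ne i j with rfl | hij
  · rfl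
  · simp only [Finsupp.add_apply, Finsupp.single_eq_of_ne hij, Finsupp.single_eq_of_ne hij.symm,
      add_zero]
    ring

theorem Matrix.adjugate_apply_eq_det_updateCol {ι A : Type*} [Fintype ι] [DecidableEq ι]
    [CommRing A] (M : Matrix ι ι A) (i j : ι) :
    M.adjugate i j = (M.updateCol i (Pi.single j 1)).det := by
  rw [← Matrix.transpose_apply M.adjugate, Matrix.adjugate_transpose, Matrix.adjugate_apply,
    Matrix.updateRow_transpose, Matrix.det_transpose]

theorem Matrix.adjugate_apply_eq_sum_perm {ι A : Type*} [Fintype ι] [DecidableEq ι]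
    [CommRing A] (M : Matrix ι ι A) (i j : ι) :
    M.adjugate i j = ∑ σ : Equiv.Perm ι, Equiv.Perm.sign σ •
      if σ i = j then ∏ k ∈ Finset.univ.erase i, M (σ k) k else 0 := by
  rw [Matrix.adjugate_apply_eq_det_updateCol, Matrix.det_apply]
  refine Finset.sum_congr rfl fun σ _ => ?_
  rw [← Finset.mul_prod_erase Finset.univ _ (Finset.mem_univ i)]
  split_ifs with hσ
  · rw [Matrix.updateCol_self, hσ, Pi.single_eq_same, one_mul]
    congr 1
    refine Finset.prod_congr rfl fun k hk => ?_
    rw [Matrix.updateCol_ne (Finset.ne_of_mem_erase hk)]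
  · rw [Matrix.updateCol_self, Pi.single_eq_of_ne hσ, zero_mul]

namespace Derivation

variable {R A ι : Type*} [CommSemiring R] [CommRing A] [Algebra R A] [Fintype ι] [DecidableEq ι]

def jacobian (D : ι → Derivation R A A) (F : ι → A) : Matrix ι ι A :=
  Matrix.of fun a b => D a (F b)

theorem sum_apply_adjugate_jacobian_eq_zero (D : ι → Derivation R A A)
    (hD : ∀ a b x, D a (D b x) = D b (D a x)) (F : ι → A) (i : ι) :
    ∑ j, D j ((jacobian D F).adjugate i j) = 0 := by
  have hrow : ∑ j, D j ((jacobian D F).adjugate i j) = ∑ σ : Equiv.Perm ι,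
      Equiv.Perm.sign σ • D (σ i) (∏ k ∈ Finset.univ.erase i, D (σ k) (F k)) := by
    simp only [Matrix.adjugate_apply_eq_sum_perm, map_sum, Units.smul_def, map_zsmul,
      apply_ite, map_zero]
    rw [Finset.sum_comm]
    simp [jacobian]
  rw [hrow]
  simp only [leibniz_prod, Finset.smul_sum]
  rw [Finset.sum_comm]
  refine Finset.sum_eq_zero fun c hc => Equiv.Perm.sum_sign_smul_eq_zero_of_mul_swap _
    (Finset.ne_of_mem_erase hc).symm fun σ => ?_
  simp only [Equiv.Perm.mul_apply, Equiv.swap_apply_left, Equiv.swap_apply_right, smul_eq_mul]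
  rw [hD]
  congr 1
  refine Finset.prod_congr rfl fun k hk => ?_
  rw [Equiv.swap_apply_of_ne_of_ne (Finset.ne_of_mem_erase (Finset.mem_of_mem_erase hk))
    (Finset.ne_of_mem_erase hk)]

end Derivation

omit [CharZero K] in
theorem pd_eq_pderiv (a : Fin n) (f : MvPowerSeries (Fin n) K) : pd a f = pderiv K a f := by
  ext ν
  rw [coeff_pderiv, mul_comm, ← Nat.cast_succ]
  rfl

omit [CharZero K] in
theorem Delta_X_eq_adjugate (F : Fin n → MvPowerSeries (Fin n) K) (i l : Fin n) :
    Delta F i (X l) = (Matrix.of fun a b => pd a (F b)).adjugate i l := by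
  rw [Delta, Matrix.adjugate_apply_eq_det_updateCol]
  congr 1
  ext a b
  rcases eq_or_ne b i with rfl | hb
  · simp [pd_eq_pderiv, pderiv_X, Pi.single_apply, eq_comm]
  · simp [hb]

theorem inverse_jacobian_divergence_free_general
    (F : Fin n → MvPowerSeries (Fin n) K)
    (hjac : Matrix.det (Matrix.of fun a b => pd a (F b)) = (1 : MvPowerSeries (Fin n) K)) :
    (Matrix.of fun i l => Delta F i (MvPowerSeries.X l)) *
        (Matrix.of fun l j => pd l (F j)) = 1 ∧
    ∀ i, ∑ j, pd j (Delta F i (MvPowerSeries.X j)) = 0 := by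
  have hΔ : (Matrix.of fun i l => Delta F i (X l)) = (Matrix.of fun a b => pd a (F b)).adjugate :=
    Matrix.ext (Delta_X_eq_adjugate F)
  refine ⟨by rw [hΔ, Matrix.adjugate_mul, hjac, one_smul], fun i => ?_⟩
  simp only [Delta_X_eq_adjugate, pd_eq_pderiv]
  exact Derivation.sum_apply_adjugate_jacobian_eq_zero _ (fun a b => pderiv_comm a b) F i

/-- If `Fᵢ = xᵢ + (terms of degree ≥ 2)` and `j(F) = 1`,
then the matrix `(Δᵢ(x_j))` is the inverse of the Jacobian matrix `J(F)`,
and each of its rows is divergence-free: `Σ_j ∂_j (Δᵢ(x_j)) = 0`. -/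
theorem inverse_jacobian_divergence_free
    (F : Fin n → MvPowerSeries (Fin n) K)
    (hF : ∀ i (μ : Fin n →₀ ℕ), dgF μ ≤ 1 →
      MvPowerSeries.coeff μ (F i) = MvPowerSeries.coeff μ (MvPowerSeries.X i))
    (hjac : Matrix.det (Matrix.of fun a b => pd a (F b)) = (1 : MvPowerSeries (Fin n) K)) :
    (Matrix.of fun i l => Delta F i (MvPowerSeries.X l)) *
        (Matrix.of fun l j => pd l (F j)) = 1 ∧
    ∀ i, ∑ j, pd j (Delta F i (MvPowerSeries.X j)) = 0 :=
  inverse_jacobian_divergence_free_general F hjac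

end
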